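/- Let L be a c-lattice and 𝔛 an M-closed subset. If i is an 𝔛-element of L, then L_* \ (i] (the set of compact elements not below i) is an 𝔛-multiplicatively closed subset of L. -/

import Mathlib

namespace CompleteLattice

/-- The December 2024 Mathlib definition of a compact element of a complete lattice
(since removed from Mathlib in favour of the root-namespace `IsCompactElement`). -/
def IsCompactElement {α : Type*} [CompleteLattice α] (k : α) :=
  ∀ s : Set α, k ≤ sSup s → ∃ t : Finset α, ↑t ⊆ s ∧ k ≤ t.sup id

end CompleteLattice

/-- A multiplicative lattice: a complete lattice with a commutative, associative
multiplication distributing over arbitrary joins, with top as identity. -/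
class MultiplicativeLattice (L : Type*) extends CompleteLattice L, CommMonoid L where
  mul_sSup : ∀ (a : L) (S : Set L), a * sSup S = ⨆ b ∈ S, a * b
  one_eq_top : (1 : L) = ⊤

namespace MultiplicativeLattice

variable {L : Type*}

/-- A subset is M-closed if it is closed under multiplication. -/
def MClosed [MultiplicativeLattice L] (X : Set L) : Prop :=
  ∀ a ∈ X, ∀ b ∈ X, a * b ∈ X

/-- A proper element `i` is an `X`-element if `a * b ≤ i` and `a ∉ X` imply `b ≤ i`. -/
def IsXElement [MultiplicativeLattice L] (X : Set L) (i : L) : Prop :=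
  i ≠ ⊤ ∧ ∀ a b : L, a * b ≤ i → a ∉ X → b ≤ i

/-- A prime element. -/
def IsPrime [MultiplicativeLattice L] (p : L) : Prop :=
  p ≠ ⊤ ∧ ∀ a b : L, a * b ≤ p → a ≤ p ∨ b ≤ p

/-- The residual `(i : a) = ⋁ {x | x * a ≤ i}`. -/
def residual [MultiplicativeLattice L] (i a : L) : L := sSup {x : L | x * a ≤ i}

/-- The radical of an element. -/
def radical [MultiplicativeLattice L] (a : L) : L :=
  sSup {x : L | CompleteLattice.IsCompactElement x ∧ ∃ n : ℕ, x ^ (n + 1) ≤ a}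

/-- A primary element. -/
def IsPrimary [MultiplicativeLattice L] (i : L) : Prop :=
  i ≠ ⊤ ∧ ∀ a b : L, a * b ≤ i → a ≤ i ∨ b ≤ radical i

/-- A minimal prime element. -/
def IsMinimalPrime [MultiplicativeLattice L] (p : L) : Prop :=
  IsPrime p ∧ ∀ q : L, IsPrime q → q ≤ p → q = p

/-- An `X`-multiplicatively closed subset: a nonempty set `A` of compact elements
containing `L_* \ X`, with `a₁ ∈ L_* \ X` and `a₂ ∈ A` implying `a₁ * a₂ ∈ A`. -/
def IsXMultClosed [MultiplicativeLattice L] (X A : Set L) : Prop :=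
  A.Nonempty ∧ (∀ a ∈ A, CompleteLattice.IsCompactElement a) ∧
    ({c : L | CompleteLattice.IsCompactElement c} \ X) ⊆ A ∧
    ∀ a₁ ∈ ({c : L | CompleteLattice.IsCompactElement c} \ X), ∀ a₂ ∈ A, a₁ * a₂ ∈ A

end MultiplicativeLattice

/-- A c-lattice: a compactly generated multiplicative lattice in which `⊤` is compact
and the product of compact elements is compact. -/
class CLattice (L : Type*) extends MultiplicativeLattice L where
  compactlyGenerated : ∀ x : L,
    x = sSup {c : L | CompleteLattice.IsCompactElement c ∧ c ≤ x}
  compact_top : CompleteLattice.IsCompactElement (⊤ : L)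
  compact_mul : ∀ a b : L, CompleteLattice.IsCompactElement a →
    CompleteLattice.IsCompactElement b → CompleteLattice.IsCompactElement (a * b)

open MultiplicativeLattice CompleteLattice

namespace MultiplicativeLattice

variable {L : Type*} [MultiplicativeLattice L] {X : Set L} {i : L}

theorem mul_top (a : L) : a * ⊤ = a := by
  rw [← one_eq_top, mul_one]

theorem IsXElement.not_top_le (hi : IsXElement X i) : ¬ ⊤ ≤ i :=
  fun h => hi.1 (top_le_iff.mp h)

theorem IsXElement.le_of_mul_le {a b : L} (hi : IsXElement X i) (hab : a * b ≤ i) (ha : a ∉ X) :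
    b ≤ i :=
  hi.2 a b hab ha

/-- Since `a = a * ⊤`, an element below `i` lying outside `X` would force `⊤ ≤ i`. -/
theorem IsXElement.not_le_of_notMem {a : L} (hi : IsXElement X i) (ha : a ∉ X) : ¬ a ≤ i :=
  fun h => hi.not_top_le (hi.le_of_mul_le (by rwa [mul_top]) ha)

theorem IsXElement.mul_not_le {a b : L} (hi : IsXElement X i) (ha : a ∉ X) (hb : ¬ b ≤ i) :
    ¬ a * b ≤ i :=
  fun h => hb (hi.le_of_mul_le h ha)

end MultiplicativeLattice

theorem stmt17_general {L : Type*} [CLattice L] (X : Set L)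
    (i : L) (hi : IsXElement X i) :
    IsXMultClosed X {c : L | CompleteLattice.IsCompactElement c ∧ ¬ c ≤ i} := by
  refine ⟨⟨⊤, CLattice.compact_top, hi.not_top_le⟩, fun a ha => ha.1, ?_, ?_⟩
  · rintro a ⟨ha_compact, ha_notMem⟩
    exact ⟨ha_compact, hi.not_le_of_notMem ha_notMem⟩
  · rintro a₁ ⟨h₁_compact, h₁_notMem⟩ a₂ ⟨h₂_compact, h₂_not_le⟩
    exact ⟨CLattice.compact_mul a₁ a₂ h₁_compact h₂_compact, hi.mul_not_le h₁_notMem h₂_not_le⟩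

theorem stmt17 {L : Type*} [CLattice L] (X : Set L) (hX : MClosed X)
    (i : L) (hi : IsXElement X i) :
    IsXMultClosed X {c : L | CompleteLattice.IsCompactElement c ∧ ¬ c ≤ i} :=
  stmt17_general X i hi
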